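/- arXiv:2501.04488 — 4 statements merged into one kernel-verified Lean document; each statement's English description precedes it below -/
import Mathlib

section
/- Let c, η, α > 0 and K(x) = √(α/(2π))·e^{-αx²/2}. Then |∫_η^∞ K(x)·e^{icx} dx| ≤ K(η)·min{2/c, 1/(αη)}. -/
open Real MeasureTheory Set Filter Complex

lemma tail_int (η α : ℝ) (hα : 0 < α) :
    ∫ x in Ioi η, α * x * Real.exp (-(α / 2) * x ^ 2)
      = Real.exp (-(α / 2) * η ^ 2) := by
  have hb : (0:ℝ) < α / 2 := by linarith
  have hderiv : ∀ x ∈ Ici η, HasDerivAt (fun x : ℝ => -Real.exp (-(α / 2) * x ^ 2))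
      (α * x * Real.exp (-(α / 2) * x ^ 2)) x := by
    intro x _
    have h1 : HasDerivAt (fun x : ℝ => -(α / 2) * x ^ 2) (-(α / 2) * (2 * x ^ 1)) x :=
      (hasDerivAt_pow 2 x).const_mul _
    have h2 := (h1.exp).neg
    exact h2.congr_deriv (by ring)
  have hint : IntegrableOn (fun x => α * x * Real.exp (-(α / 2) * x ^ 2)) (Ioi η) := by
    have := ((integrable_mul_exp_neg_mul_sq hb).const_mul α).integrableOn (s := Ioi η)
    simpa [mul_assoc] using this
  have htop : Tendsto (fun x : ℝ => -Real.exp (-(α / 2) * x ^ 2)) atTop (nhds 0) := by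
    rw [show (0:ℝ) = -0 by ring]
    refine Tendsto.neg ?_
    have h1 : Tendsto (fun x : ℝ => α / 2 * x ^ 2) atTop atTop :=
      (tendsto_pow_atTop (n := 2) (by norm_num)).const_mul_atTop hb
    simpa using h1
  have := integral_Ioi_of_hasDerivAt_of_tendsto' hderiv hint htop
  rw [this]; ring

lemma exp_tendsto (α : ℝ) (hα : 0 < α) :
    Tendsto (fun x : ℝ => Real.exp (-(α / 2) * x ^ 2)) atTop (nhds 0) := by
  have h1 : Tendsto (fun x : ℝ => α / 2 * x ^ 2) atTop atTop :=
    (tendsto_pow_atTop (n := 2) (by norm_num)).const_mul_atTop (by linarith)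
  simpa using h1

lemma norm_cexp_Icx (c x : ℝ) : ‖Complex.exp (Complex.I * c * x)‖ = 1 := by
  rw [Complex.norm_exp]
  have : (Complex.I * c * x).re = 0 := by simp
  rw [this, Real.exp_zero]

theorem gaussian_tail_osc (c η α : ℝ) (hc : 0 < c) (hη : 0 < η) (hα : 0 < α) :
    ‖∫ x in Ici η, ((Real.sqrt (α / (2 * π)) * Real.exp (-(α / 2) * x ^ 2) : ℝ) : ℂ) *
        Complex.exp (Complex.I * c * x)‖
      ≤ Real.sqrt (α / (2 * π)) * Real.exp (-(α / 2) * η ^ 2) *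
        min (2 / c) (1 / (α * η)) := by
  have hb : (0:ℝ) < α / 2 := by linarith
  set E : ℝ → ℝ := fun x => Real.exp (-(α / 2) * x ^ 2) with hE
  have hEpos : ∀ x, 0 < E x := fun x => Real.exp_pos _
  set s : ℝ := Real.sqrt (α / (2 * π)) with hs
  rw [MeasureTheory.integral_Ici_eq_integral_Ioi]
  have hre : (fun x : ℝ => ((s * E x : ℝ) : ℂ) * Complex.exp (Complex.I * c * x))
      = fun x : ℝ => (s : ℂ) * (((E x : ℝ) : ℂ) * Complex.exp (Complex.I * c * x)) := by
    funext x; push_cast; ring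
  rw [hre, MeasureTheory.integral_const_mul, norm_mul, Complex.norm_real, Real.norm_eq_abs,
    _root_.abs_of_nonneg (Real.sqrt_nonneg _), mul_assoc]
  refine mul_le_mul_of_nonneg_left ?_ (Real.sqrt_nonneg _)
  -- main goal : ‖∫ x in Ioi η, (E x : ℂ) * cexp (I c x)‖ ≤ E η * min (2/c) (1/(α η))
  have hxg_int : IntegrableOn (fun x => α * x * E x) (Ioi η) := by
    have := ((integrable_mul_exp_neg_mul_sq hb).const_mul α).integrableOn (s := Ioi η)
    simpa [hE, mul_assoc] using this
  have hB_int : IntegrableOn (fun x : ℝ => ((E x : ℝ) : ℂ) * Complex.exp (Complex.I * c * x))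
      (Ioi η) := by
    refine Integrable.mono' ((integrable_exp_neg_mul_sq hb).integrableOn (s := Ioi η)) ?_ ?_
    · exact (Continuous.aestronglyMeasurable (by fun_prop)).restrict
    · filter_upwards with x
      rw [norm_mul, Complex.norm_real, Real.norm_eq_abs, abs_of_pos (hEpos x), norm_cexp_Icx,
        mul_one]
  rw [mul_min_of_nonneg _ _ (hEpos η).le]
  refine le_min ?_ ?_
  · -- oscillation bound via integration by parts
    set F : ℝ → ℂ := fun x => (Complex.exp (Complex.I * c * x) - Complex.exp (Complex.I * c * η))
      / (Complex.I * c) with hF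
    have hIc : (Complex.I * (c : ℂ)) ≠ 0 :=
      mul_ne_zero Complex.I_ne_zero (by exact_mod_cast hc.ne')
    have hIcnorm : ‖Complex.I * (c : ℂ)‖ = c := by
      rw [norm_mul, Complex.norm_I, one_mul, Complex.norm_real, Real.norm_eq_abs,
        _root_.abs_of_pos hc]
    have hFnorm : ∀ x : ℝ, ‖F x‖ ≤ 2 / c := by
      intro x
      rw [hF, norm_div, hIcnorm]
      refine div_le_div_of_nonneg_right ?_ hc.le
      calc ‖Complex.exp (Complex.I * c * x) - Complex.exp (Complex.I * c * η)‖
          ≤ ‖Complex.exp (Complex.I * c * x)‖ + ‖Complex.exp (Complex.I * c * η)‖ :=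
            norm_sub_le _ _
        _ = 2 := by rw [norm_cexp_Icx, norm_cexp_Icx]; norm_num
    have hFderiv : ∀ x : ℝ, HasDerivAt F (Complex.exp (Complex.I * c * x)) x := by
      intro x
      have h0 : HasDerivAt (fun z : ℂ => Complex.exp (Complex.I * c * z))
          (Complex.I * c * Complex.exp (Complex.I * c * x)) (x : ℂ) := by
        have := (((hasDerivAt_id ((x : ℝ) : ℂ)).const_mul (Complex.I * (c:ℂ))).cexp)
        simpa [mul_comm] using this
      have h2 := ((h0.comp_ofReal).sub_const (Complex.exp (Complex.I * c * η))).div_const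
        (Complex.I * c)
      simpa [mul_div_cancel_left₀ _ hIc] using h2
    have hFcont : Continuous F := by
      rw [hF]; fun_prop
    have hgderiv : ∀ x : ℝ, HasDerivAt (fun x : ℝ => ((E x : ℝ) : ℂ))
        ((-(α * x * E x) : ℝ) : ℂ) x := by
      intro x
      have h1 : HasDerivAt (fun x : ℝ => -(α / 2) * x ^ 2) (-(α / 2) * (2 * x ^ 1)) x :=
        (hasDerivAt_pow 2 x).const_mul _
      have h2 : HasDerivAt E (-(α * x * E x)) x := by
        have := h1.exp
        convert this using 1
        rw [hE]; ring
      exact h2.ofReal_comp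
    have hP : ∀ x : ℝ, x ∈ Ici η → HasDerivAt (fun x : ℝ => ((E x : ℝ) : ℂ) * F x)
        (((-(α * x * E x) : ℝ) : ℂ) * F x + ((E x : ℝ) : ℂ) * Complex.exp (Complex.I * c * x))
        x := fun x _ => (hgderiv x).mul (hFderiv x)
    have hA_int : IntegrableOn (fun x : ℝ => ((-(α * x * E x) : ℝ) : ℂ) * F x) (Ioi η) := by
      refine Integrable.mono' ((hxg_int.const_mul (2 / c))) ?_ ?_
      · exact (Continuous.aestronglyMeasurable (by fun_prop)).restrict
      · filter_upwards [ae_restrict_mem measurableSet_Ioi] with x hx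
        have hx' : η < x := hx
        rw [norm_mul, Complex.norm_real, Real.norm_eq_abs, abs_neg, abs_mul, abs_mul,
          _root_.abs_of_pos hα, _root_.abs_of_pos (lt_trans hη hx'),
          _root_.abs_of_pos (hEpos x)]
        calc α * x * E x * ‖F x‖ ≤ α * x * E x * (2 / c) :=
              mul_le_mul_of_nonneg_left (hFnorm x)
              (mul_nonneg (mul_nonneg hα.le (lt_trans hη hx').le) (hEpos x).le)
          _ = 2 / c * (α * x * E x) := by ring
    have hlim : Tendsto (fun x : ℝ => ((E x : ℝ) : ℂ) * F x) atTop (nhds 0) := by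
      refine squeeze_zero_norm (a := fun x => 2 / c * E x) (fun x => ?_) ?_
      · show ‖((E x : ℝ) : ℂ) * F x‖ ≤ 2 / c * E x
        rw [norm_mul, Complex.norm_real, Real.norm_eq_abs, _root_.abs_of_pos (hEpos x)]
        calc E x * ‖F x‖ ≤ E x * (2 / c) :=
              mul_le_mul_of_nonneg_left (hFnorm x) (hEpos x).le
          _ = 2 / c * E x := by ring
      · have := (exp_tendsto α hα).const_mul (2 / c)
        simpa [hE] using this
    have key := integral_Ioi_of_hasDerivAt_of_tendsto' hP (hA_int.add hB_int) hlim
    have hFη : F η = 0 := by rw [hF]; simp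
    rw [MeasureTheory.integral_add hA_int hB_int, hFη, mul_zero, zero_sub, neg_zero] at key
    have hJ : (∫ x in Ioi η, ((E x : ℝ) : ℂ) * Complex.exp (Complex.I * c * x))
        = -∫ x in Ioi η, ((-(α * x * E x) : ℝ) : ℂ) * F x := by linear_combination key
    rw [hJ, norm_neg]
    have hbound : ‖∫ x in Ioi η, ((-(α * x * E x) : ℝ) : ℂ) * F x‖
        ≤ ∫ x in Ioi η, 2 / c * (α * x * E x) := by
      refine norm_integral_le_of_norm_le (hxg_int.const_mul (2 / c)) ?_
      filter_upwards [ae_restrict_mem measurableSet_Ioi] with x hx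
      have hx' : η < x := hx
      rw [norm_mul, Complex.norm_real, Real.norm_eq_abs, abs_neg, abs_mul, abs_mul,
        _root_.abs_of_pos hα, _root_.abs_of_pos (lt_trans hη hx'), _root_.abs_of_pos (hEpos x)]
      calc α * x * E x * ‖F x‖ ≤ α * x * E x * (2 / c) :=
            mul_le_mul_of_nonneg_left (hFnorm x)
              (mul_nonneg (mul_nonneg hα.le (lt_trans hη hx').le) (hEpos x).le)
        _ = 2 / c * (α * x * E x) := by ring
    calc ‖∫ x in Ioi η, ((-(α * x * E x) : ℝ) : ℂ) * F x‖
        ≤ ∫ x in Ioi η, 2 / c * (α * x * E x) := hbound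
      _ = 2 / c * E η := by rw [MeasureTheory.integral_const_mul, tail_int η α hα]
      _ = E η * (2 / c) := by ring
  · -- crude bound
    have h1 : ‖∫ x in Ioi η, ((E x : ℝ) : ℂ) * Complex.exp (Complex.I * c * x)‖
        ≤ ∫ x in Ioi η, E x := by
      refine norm_integral_le_of_norm_le ((integrable_exp_neg_mul_sq hb).integrableOn) ?_
      filter_upwards with x
      rw [norm_mul, Complex.norm_real, Real.norm_eq_abs, _root_.abs_of_pos (hEpos x),
        norm_cexp_Icx, mul_one]
    have h2 : ∫ x in Ioi η, E x ≤ ∫ x in Ioi η, (1 / (α * η)) * (α * x * E x) := by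
      refine setIntegral_mono_on ((integrable_exp_neg_mul_sq hb).integrableOn)
        (hxg_int.const_mul _) measurableSet_Ioi ?_
      intro x hx
      have hx' : η < x := hx
      rw [one_div, inv_mul_eq_div, le_div_iff₀ (by positivity)]
      nlinarith [mul_nonneg (mul_nonneg hα.le (sub_nonneg.mpr hx'.le)) (hEpos x).le]
    have h3 : ∫ x in Ioi η, (1 / (α * η)) * (α * x * E x) = (1 / (α * η)) * E η := by
      rw [MeasureTheory.integral_const_mul, tail_int η α hα]
    calc ‖∫ x in Ioi η, ((E x : ℝ) : ℂ) * Complex.exp (Complex.I * c * x)‖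
        ≤ ∫ x in Ioi η, E x := h1
      _ ≤ (1 / (α * η)) * E η := by rw [← h3]; exact h2
      _ = E η * (1 / (α * η)) := by ring
end

section
/- For every integer n ≥ 1 and every complex z with Im(z) ≠ 0, li(e^z) = e^z·(∑_{k=1}^{n} (k-1)!/z^k + n!·∫₀^∞ e^{-t}/(z-t)^{n+1} dt), where li(e^z) = ∫_{-∞+iy}^{x+iy} e^t/t dt for z = x + iy. -/
/-!
Write `I_m = ∫₀^∞ e^{-t} (z - t)^{-m} dt`. Integrating by parts against `-e^{-t}` gives
`I_m = z^{-m} + m I_{m+1}`; the boundary term at infinity vanishes because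
`|z - t| ≥ |Im z| > 0` for real `t`. Unrolling this recurrence `n` times from `I_1` gives the
expansion.
-/

open Complex MeasureTheory Set Filter

/-- `li (e^z)` for non-real `z`, via Lehman's integral representation. -/
noncomputable def liExp (z : ℂ) : ℂ :=
  Complex.exp z * ∫ t in Ioi (0:ℝ), Complex.exp (-(t:ℂ)) / (z - t)

section IntegrationByParts

variable {z : ℂ}

lemma sub_ofReal_ne_zero_of_im_ne_zero (hz : z.im ≠ 0) (t : ℝ) : z - t ≠ 0 := by
  intro h
  exact hz (by simpa using congrArg Complex.im h)

lemma norm_exp_neg_div_sub_pow_le (hz : z.im ≠ 0) (t : ℝ) (m : ℕ) :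
    ‖Complex.exp (-(t:ℂ)) / (z - t) ^ m‖ ≤ |z.im|⁻¹ ^ m * Real.exp (-t) := by
  have him : |z.im| ≤ ‖z - t‖ := by simpa using Complex.abs_im_le_norm (z - t)
  have hpos : 0 < |z.im| := abs_pos.2 hz
  rw [norm_div, norm_pow, Complex.norm_exp, neg_re, ofReal_re, div_eq_inv_mul, ← inv_pow]
  gcongr

lemma integrableOn_exp_neg_div_sub_pow (hz : z.im ≠ 0) (m : ℕ) :
    IntegrableOn (fun t : ℝ => Complex.exp (-(t:ℂ)) / (z - t) ^ m) (Ioi 0) := by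
  have hcont : Continuous (fun t : ℝ => Complex.exp (-(t:ℂ)) / (z - t) ^ m) := by
    have := fun t => pow_ne_zero m (sub_ofReal_ne_zero_of_im_ne_zero hz t)
    fun_prop (disch := assumption)
  exact ((integrableOn_exp_neg_Ioi 0).const_mul (|z.im|⁻¹ ^ m)).mono'
    hcont.aestronglyMeasurable (ae_of_all _ fun t => norm_exp_neg_div_sub_pow_le hz t m)

lemma tendsto_exp_neg_div_sub_pow_atTop (hz : z.im ≠ 0) (m : ℕ) :
    Tendsto (fun t : ℝ => Complex.exp (-(t:ℂ)) / (z - t) ^ m) atTop (nhds 0) := by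
  rw [tendsto_zero_iff_norm_tendsto_zero]
  refine squeeze_zero (fun _ => norm_nonneg _) (fun t => norm_exp_neg_div_sub_pow_le hz t m) ?_
  simpa using Real.tendsto_exp_neg_atTop_nhds_zero.const_mul (|z.im|⁻¹ ^ m)

lemma hasDerivAt_neg_exp_neg_div_sub_pow (hz : z.im ≠ 0) (m : ℕ) (t : ℝ) :
    HasDerivAt (fun s : ℝ => -Complex.exp (-(s:ℂ)) / (z - s) ^ m)
      (Complex.exp (-(t:ℂ)) / (z - t) ^ m - m * (Complex.exp (-(t:ℂ)) / (z - t) ^ (m + 1))) t := by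
  have hexp : HasDerivAt (fun s : ℝ => -Complex.exp (-(s:ℂ))) (Complex.exp (-(t:ℂ))) t := by
    simpa using (ofRealCLM.hasDerivAt (x := t)).fun_neg.cexp.fun_neg
  have hsub : HasDerivAt (fun s : ℝ => z - s) (-1) t := by
    simpa using (ofRealCLM.hasDerivAt (x := t)).const_sub z
  have hne := sub_ofReal_ne_zero_of_im_ne_zero hz t
  refine (hexp.fun_div (hsub.fun_pow m) (pow_ne_zero m hne)).congr_deriv ?_
  rcases m with _ | m
  · simp
  · field_simp
    push_cast
    ring

lemma integral_exp_neg_div_sub_pow_eq (hz : z.im ≠ 0) (m : ℕ) :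
    ∫ t in Ioi (0:ℝ), Complex.exp (-(t:ℂ)) / (z - t) ^ m =
      1 / z ^ m + m * ∫ t in Ioi (0:ℝ), Complex.exp (-(t:ℂ)) / (z - t) ^ (m + 1) := by
  have hftc := integral_Ioi_of_hasDerivAt_of_tendsto'
    (fun t _ => hasDerivAt_neg_exp_neg_div_sub_pow hz m t)
    ((integrableOn_exp_neg_div_sub_pow hz m).sub
      ((integrableOn_exp_neg_div_sub_pow hz (m + 1)).const_mul _))
    (by simpa [neg_div] using (tendsto_exp_neg_div_sub_pow_atTop hz m).neg)
  rw [integral_sub (integrableOn_exp_neg_div_sub_pow hz m)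
    ((integrableOn_exp_neg_div_sub_pow hz (m + 1)).const_mul _), integral_const_mul] at hftc
  simp only [ofReal_zero, neg_zero, Complex.exp_zero, sub_zero] at hftc
  linear_combination hftc

lemma integral_exp_neg_div_sub_eq_sum_add (hz : z.im ≠ 0) (n : ℕ) :
    ∫ t in Ioi (0:ℝ), Complex.exp (-(t:ℂ)) / (z - t) =
      (∑ k ∈ Finset.Icc 1 n, ((k - 1).factorial : ℂ) / z ^ k) +
        (n.factorial : ℂ) * ∫ t in Ioi (0:ℝ), Complex.exp (-(t:ℂ)) / (z - t) ^ (n + 1) := by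
  induction n with
  | zero => simp
  | succ n ih =>
    rw [ih, integral_exp_neg_div_sub_pow_eq hz, Finset.sum_Icc_succ_top (by omega)]
    push_cast [Nat.factorial_succ, Nat.add_sub_cancel]
    ring

end IntegrationByParts

theorem liExp_expansion_general (n : ℕ) (z : ℂ) (hz : z.im ≠ 0) :
    liExp z = Complex.exp z *
      ((∑ k ∈ Finset.Icc 1 n, ((k - 1).factorial : ℂ) / z ^ k) +
        (n.factorial : ℂ) * ∫ t in Ioi (0:ℝ), Complex.exp (-(t:ℂ)) / (z - t) ^ (n + 1)) := by
  rw [liExp, integral_exp_neg_div_sub_eq_sum_add hz n]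

theorem liExp_expansion (n : ℕ) (hn : 1 ≤ n) (z : ℂ) (hz : z.im ≠ 0) :
    liExp z = Complex.exp z *
      ((∑ k ∈ Finset.Icc 1 n, ((k - 1).factorial : ℂ) / z ^ k) +
        (n.factorial : ℂ) * ∫ t in Ioi (0:ℝ), Complex.exp (-(t:ℂ)) / (z - t) ^ (n + 1)) :=
  liExp_expansion_general n z hz
end

section
/- For all real γ with |γ| ≥ A > 0 and all α > 0, ∑_{n=1}^{N-1} n!·(αe/n)^{n/2}·|γ|^{-n} ≤ (eA/√α)·(1/(√e − 1)), where N = ⌊A²/α⌋ and α ≤ A². -/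
/-!
Bounding `n!` by `e √n (n/e)^n` (the Stirling sequence decreases from its value `e/√2` at
`n = 1`), each summand becomes at most `e √n (nα/(eγ²))^{n/2}`. In the range of summation
`nα ≤ A² ≤ γ²`, so this is at most `(eA/√α) e^{-n/2}`, and the geometric series
`∑_{n ≥ 1} e^{-n/2}` equals `1/(√e - 1)`.
-/

open Real

theorem factorial_le_exp_one_mul_sqrt_mul_pow {n : ℕ} (hn : n ≠ 0) :
    (n.factorial : ℝ) ≤ exp 1 * √n * (n / exp 1) ^ n := by
  obtain ⟨m, rfl⟩ := Nat.exists_eq_succ_of_ne_zero hn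
  have hseq : Stirling.stirlingSeq (m + 1) ≤ exp 1 / √2 :=
    Stirling.stirlingSeq_one ▸ Stirling.stirlingSeq'_antitone m.zero_le
  rw [Stirling.stirlingSeq, div_le_iff₀ (by positivity)] at hseq
  refine hseq.trans_eq ?_
  rw [sqrt_mul zero_le_two]
  field_simp

theorem factorial_mul_rpow_mul_rpow_neg_le {α x : ℝ} {n : ℕ} (hα : 0 < α) (hx : 0 < x)
    (hn : n ≠ 0) (hnα : n * α ≤ x ^ 2) :
    (n.factorial : ℝ) * (α * exp 1 / n) ^ ((n : ℝ) / 2) * x ^ (-(n : ℝ)) ≤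
      exp 1 * √n * exp (-1 / 2) ^ n := by
  have hratio : (n / exp 1) * √(α * exp 1 / n) * x⁻¹ ≤ exp (-1 / 2) := by
    rw [← pow_le_pow_iff_left₀ (by positivity) (exp_pos _).le two_ne_zero, ← exp_nat_mul,
      mul_pow, mul_pow, sq_sqrt (by positivity)]
    calc (n / exp 1) ^ 2 * (α * exp 1 / n) * x⁻¹ ^ 2 = n * α / x ^ 2 * exp (-1) := by
          rw [exp_neg]; field_simp
      _ ≤ 1 * exp (-1) := by gcongr; exact div_le_one_of_le₀ hnα (sq_nonneg x)
      _ = exp ((2 : ℕ) * (-1 / 2)) := by norm_num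
  rw [rpow_div_two_eq_sqrt _ (by positivity), rpow_neg hx.le, rpow_natCast, rpow_natCast,
    ← inv_pow]
  calc (n.factorial : ℝ) * √(α * exp 1 / n) ^ n * x⁻¹ ^ n
      ≤ exp 1 * √n * (n / exp 1) ^ n * √(α * exp 1 / n) ^ n * x⁻¹ ^ n := by
        gcongr; exact factorial_le_exp_one_mul_sqrt_mul_pow hn
    _ = exp 1 * √n * ((n / exp 1) * √(α * exp 1 / n) * x⁻¹) ^ n := by ring
    _ ≤ exp 1 * √n * exp (-1 / 2) ^ n := by gcongr

theorem exp_neg_half_div_one_sub_exp_neg_half :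
    exp (-1 / 2) / (1 - exp (-1 / 2)) = 1 / (√(exp 1) - 1) := by
  have hsqrt : √(exp 1) = exp (1 / 2) := by rw [sqrt_eq_rpow, exp_one_rpow]
  have hinv : exp (-1 / 2) = (exp (1 / 2))⁻¹ := by rw [← exp_neg]; norm_num
  have hgt : 1 < exp (1 / 2) := one_lt_exp_iff.mpr (by norm_num)
  rw [hsqrt, hinv]
  field_simp [(sub_pos.mpr hgt).ne']

theorem factorial_mul_rpow_mul_rpow_neg_le_of_mul_le {A α x : ℝ} {n : ℕ} (hA : 0 < A)
    (hα : 0 < α) (hAx : A ≤ x) (hn : n ≠ 0) (hnα : n * α ≤ A ^ 2) :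
    (n.factorial : ℝ) * (α * exp 1 / n) ^ ((n : ℝ) / 2) * x ^ (-(n : ℝ)) ≤
      exp 1 * A / √α * exp (-1 / 2) ^ n := by
  have hsqrt : √n ≤ A / √α := by
    rw [le_div_iff₀ (by positivity), ← sqrt_mul n.cast_nonneg, ← sqrt_sq hA.le]
    exact sqrt_le_sqrt hnα
  calc _ ≤ exp 1 * √n * exp (-1 / 2) ^ n :=
        factorial_mul_rpow_mul_rpow_neg_le hα (hA.trans_le hAx) hn
          (hnα.trans (pow_le_pow_left₀ hA.le hAx 2))
    _ ≤ exp 1 * (A / √α) * exp (-1 / 2) ^ n := by gcongr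
    _ = exp 1 * A / √α * exp (-1 / 2) ^ n := by ring

theorem derivative_sum_bound_general (A α γ : ℝ) (hA : 0 < A) (hα : 0 < α)
    (hγ : A ≤ |γ|) :
    ∑ n ∈ Finset.Icc 1 (⌊A ^ 2 / α⌋₊ - 1),
        (n.factorial : ℝ) * (α * Real.exp 1 / n) ^ ((n : ℝ) / 2) * |γ| ^ (-(n : ℝ))
      ≤ (Real.exp 1 * A / Real.sqrt α) * (1 / (Real.sqrt (Real.exp 1) - 1)) := by
  set N := ⌊A ^ 2 / α⌋₊
  set r := exp (-1 / 2)
  have hterm : ∀ n ∈ Finset.Icc 1 (N - 1),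
      (n.factorial : ℝ) * (α * exp 1 / n) ^ ((n : ℝ) / 2) * |γ| ^ (-(n : ℝ)) ≤
        exp 1 * A / √α * r ^ n := by
    intro n hn
    obtain ⟨hn1, hnN⟩ := Finset.mem_Icc.mp hn
    refine factorial_mul_rpow_mul_rpow_neg_le_of_mul_le hA hα hγ (by omega) ?_
    exact (le_div_iff₀ hα).mp ((Nat.le_floor_iff (by positivity)).mp (by omega))
  calc _ ≤ ∑ n ∈ Finset.Icc 1 (N - 1), exp 1 * A / √α * r ^ n := Finset.sum_le_sum hterm
    _ = exp 1 * A / √α * ∑ n ∈ Finset.Ico 1 (N - 1 + 1), r ^ n := by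
        rw [← Finset.mul_sum, Finset.Ico_add_one_right_eq_Icc]
    _ ≤ exp 1 * A / √α * (r ^ 1 / (1 - r)) := by
        gcongr
        exact geom_sum_Ico_le_of_lt_one (exp_pos _).le (exp_lt_one_iff.mpr (by norm_num))
    _ = _ := by rw [pow_one, exp_neg_half_div_one_sub_exp_neg_half]

theorem derivative_sum_bound (A α γ : ℝ) (hA : 0 < A) (hα : 0 < α) (hαA : α ≤ A ^ 2)
    (hγ : A ≤ |γ|) :
    ∑ n ∈ Finset.Icc 1 (⌊A ^ 2 / α⌋₊ - 1),
        (n.factorial : ℝ) * (α * Real.exp 1 / n) ^ ((n : ℝ) / 2) * |γ| ^ (-(n : ℝ))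
      ≤ (Real.exp 1 * A / Real.sqrt α) * (1 / (Real.sqrt (Real.exp 1) - 1)) :=
  derivative_sum_bound_general A α γ hA hα hγ
end

section
/- Let N = ⌊A²/α⌋ with A > 0, 0 < α ≤ A², and let η > 0 and |γ| ≥ A. Then N!·η·(αe/N)^{N/2}·|γ|^{-(N-1)} ≤ A²·e^{3/2}·η·α^{-1/2}·e^{-A²/(2α)}. -/
open Real

lemma fact_log_bound (N : ℕ) (hN : 1 ≤ N) :
    Real.log (N.factorial) ≤ 1 + (1 / 2) * Real.log N + N * (Real.log N - 1) := by
  obtain ⟨m, rfl⟩ := Nat.exists_eq_succ_of_ne_zero (by omega : N ≠ 0)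
  have hanti := Stirling.log_stirlingSeq'_antitone (Nat.zero_le m)
  simp only [Function.comp_apply, Nat.succ_eq_add_one, Nat.zero_add] at hanti
  have hform := Stirling.log_stirlingSeq_formula (m + 1)
  have h1 : Real.log (Stirling.stirlingSeq 1) = 1 - (1 / 2) * Real.log 2 := by
    rw [Stirling.stirlingSeq_one, Real.log_div (Real.exp_ne_zero 1) (by positivity),
      Real.log_exp, Real.log_sqrt (by norm_num)]
    ring
  have hn0 : (0 : ℝ) < ((m + 1 : ℕ) : ℝ) := by positivity
  have h2 : Real.log (2 * ((m + 1 : ℕ) : ℝ)) = Real.log 2 + Real.log ((m + 1 : ℕ) : ℝ) :=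
    Real.log_mul (by norm_num) (ne_of_gt hn0)
  have h3 : Real.log (((m + 1 : ℕ) : ℝ) / Real.exp 1) =
      Real.log ((m + 1 : ℕ) : ℝ) - 1 := by
    rw [Real.log_div (ne_of_gt hn0) (Real.exp_ne_zero 1), Real.log_exp]
  rw [hform, h1, h2, h3] at hanti
  nlinarith [hanti]

theorem last_term_bound (A α η γ : ℝ) (hA : 0 < A) (hα : 0 < α) (hαA : α ≤ A ^ 2)
    (hη : 0 < η) (hγ : A ≤ |γ|) :
    ((⌊A ^ 2 / α⌋₊).factorial : ℝ) * η *
        (α * Real.exp 1 / (⌊A ^ 2 / α⌋₊ : ℝ)) ^ (((⌊A ^ 2 / α⌋₊ : ℝ)) / 2) *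
        |γ| ^ (-(((⌊A ^ 2 / α⌋₊ : ℝ)) - 1))
      ≤ A ^ 2 * Real.exp 1 ^ ((3 : ℝ) / 2) * η * α ^ (-(1 : ℝ) / 2) *
        Real.exp (-A ^ 2 / (2 * α)) := by
  set N := ⌊A ^ 2 / α⌋₊ with hNdef
  have hN1 : 1 ≤ N := Nat.le_floor (by rw [Nat.cast_one, le_div_iff₀ hα]; linarith)
  have hn0 : (0 : ℝ) < (N : ℝ) := by exact_mod_cast Nat.pos_of_ne_zero (by omega)
  have hnle : (N : ℝ) ≤ A ^ 2 / α := Nat.floor_le (by positivity)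
  have hnlb : A ^ 2 / α < (N : ℝ) + 1 := Nat.lt_floor_add_one _
  have hγ0 : (0 : ℝ) < |γ| := lt_of_lt_of_le hA hγ
  have hBpos : (0 : ℝ) < α * Real.exp 1 / (N : ℝ) := by positivity
  have hLpos : (0 : ℝ) < ((N.factorial : ℝ)) * η *
      (α * Real.exp 1 / (N : ℝ)) ^ (((N : ℝ)) / 2) * |γ| ^ (-(((N : ℝ)) - 1)) := by
    have := N.factorial_pos
    positivity
  have hRpos : (0 : ℝ) < A ^ 2 * Real.exp 1 ^ ((3 : ℝ) / 2) * η * α ^ (-(1 : ℝ) / 2) *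
      Real.exp (-A ^ 2 / (2 * α)) := by positivity
  rw [← Real.log_le_log_iff hLpos hRpos]
  have hfactpos : (0 : ℝ) < (N.factorial : ℝ) := by exact_mod_cast N.factorial_pos
  rw [Real.log_mul (by positivity) (by positivity), Real.log_mul (by positivity) (by positivity),
    Real.log_mul (ne_of_gt hfactpos) (ne_of_gt hη),
    Real.log_rpow hBpos, Real.log_rpow hγ0]
  rw [Real.log_mul (by positivity) (by positivity), Real.log_mul (by positivity) (by positivity),
    Real.log_mul (by positivity) (ne_of_gt hη),
    Real.log_mul (by positivity) (by positivity),
    Real.log_rpow (Real.exp_pos 1), Real.log_rpow hα, Real.log_exp, Real.log_exp,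
    Real.log_pow]
  have hfact := fact_log_bound N hN1
  have hB : Real.log (α * Real.exp 1 / (N : ℝ)) =
      Real.log α + 1 - Real.log (N : ℝ) := by
    rw [Real.log_div (by positivity) (ne_of_gt hn0),
      Real.log_mul (ne_of_gt hα) (Real.exp_ne_zero 1), Real.log_exp]
  rw [hB]
  -- key log facts
  have hS : Real.log (N : ℝ) + Real.log α - 2 * Real.log A ≤ 0 := by
    have h1 : (N : ℝ) * α ≤ A ^ 2 := by
      rw [← le_div_iff₀ hα] at *; exact hnle
    have h2 : Real.log ((N : ℝ) * α) ≤ Real.log (A ^ 2) :=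
      Real.log_le_log (by positivity) h1
    rw [Real.log_mul (ne_of_gt hn0) (ne_of_gt hα), Real.log_pow] at h2
    push_cast at h2
    linarith
  have hlγ : Real.log A ≤ Real.log |γ| := Real.log_le_log hA hγ
  have hA2 : A ^ 2 / (2 * α) ≤ ((N : ℝ) + 1) / 2 := by
    rw [div_le_div_iff₀ (by positivity) (by norm_num)]
    have := hnlb
    rw [div_lt_iff₀ hα] at this
    nlinarith
  have hprod1 : (N : ℝ) * (Real.log (N : ℝ) + Real.log α - 2 * Real.log A) ≤ 0 :=
    mul_nonpos_of_nonneg_of_nonpos (le_of_lt hn0) hS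
  have hprod2 : 0 ≤ ((N : ℝ) - 1) * (Real.log |γ| - Real.log A) := by
    have : (1 : ℝ) ≤ (N : ℝ) := by exact_mod_cast hN1
    nlinarith
  push_cast
  have hQ : -A ^ 2 / (2 * α) = -(A ^ 2 / (2 * α)) := by ring
  rw [hQ]
  nlinarith [hfact, hprod1, hprod2, hA2, hS]
end
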